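/- arXiv:2311.10330 — 4 statements merged into one kernel-verified Lean document; each statement's English description precedes it below -/
import Mathlib

section
/- The disjoint union of t copies of the 4-cycle C_4 (t ≥ 1) is a distance magic graph with magic constant 4t+1. -/
open Finset
open scoped Classical

/-- The weight of a vertex `v`: the sum of the labels of its neighbors. -/
noncomputable def vertexWeight {V : Type} [Fintype V] (G : SimpleGraph V)
    (f : V → ℕ) (v : V) : ℕ :=
  ∑ u ∈ Finset.univ.filter (fun u => G.Adj v u), f u

/-- `G` is a distance magic graph with magic constant `k`: there is a bijective labeling of the
vertices by `{1, ..., n}` such that every vertex's neighborhood label-sum equals `k`. -/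
def IsDistanceMagic {V : Type} [Fintype V] (G : SimpleGraph V) (k : ℕ) : Prop :=
  ∃ f : V ≃ Fin (Fintype.card V),
    ∀ v : V, vertexWeight G (fun u => (f u : ℕ) + 1) v = k

/-- `k` is a magic constant: some (nonempty) graph realizes it. -/
def IsMagicConstant (k : ℕ) : Prop :=
  ∃ n : ℕ, 0 < n ∧ ∃ G : SimpleGraph (Fin n), IsDistanceMagic G k


/-- The disjoint union of `t` copies of the 4-cycle `C₄`. -/
def tC4graph (t : ℕ) : SimpleGraph (Fin t × Fin 4) where
  Adj x y := x.1 = y.1 ∧ (SimpleGraph.cycleGraph 4).Adj x.2 y.2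
  symm := ⟨fun x y h => ⟨h.1.symm, (SimpleGraph.cycleGraph 4).adj_symm h.2⟩⟩
  loopless := ⟨fun x h => (SimpleGraph.cycleGraph 4).irrefl h.2⟩

/-!
Label the `j`-th cycle `0 1 2 3` by `2j, 2j+1, 4t-1-2j, 4t-2-2j` (0-based), so that antipodal
vertices carry labels `x` and `4t-1-x`. The two neighbours of a vertex of `C₄` are antipodal, so
with 1-based labels every vertex weight is `(x + 1) + (4t - x) = 4t + 1`.
-/

theorem cycleGraph_four_adj_iff {i i' : Fin 4} :
    (SimpleGraph.cycleGraph 4).Adj i i' ↔ i' = i + 1 ∨ i' = i + 3 := by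
  revert i i'; decide

theorem vertexWeight_tC4graph {t : ℕ} (f : Fin t × Fin 4 → ℕ) (j : Fin t) (i : Fin 4) :
    vertexWeight (tC4graph t) f (j, i) = f (j, i + 1) + f (j, i + 3) := by
  have hne : i + 1 ≠ i + 3 := by revert i; decide
  have hneighbors :
      univ.filter (fun u => (tC4graph t).Adj (j, i) u) = {(j, i + 1), (j, i + 3)} := by
    ext ⟨j', i'⟩
    simp only [mem_filter, mem_univ, true_and, tC4graph, cycleGraph_four_adj_iff,
      mem_insert, mem_singleton, Prod.mk.injEq]
    grind
  rw [vertexWeight, hneighbors, sum_pair (by simp [hne])]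

def tC4label (t : ℕ) (x : Fin t × Fin 4) : Fin (4 * t) :=
  let low : Fin (4 * t) := ⟨2 * x.1 + x.2 % 2, by omega⟩
  if (x.2 : ℕ) < 2 then low else low.rev

theorem tC4label_add_two {t : ℕ} (j : Fin t) (i : Fin 4) :
    tC4label t (j, i + 2) = (tC4label t (j, i)).rev := by
  fin_cases i <;> simp [tC4label]

theorem tC4label_injective (t : ℕ) : Function.Injective (tC4label t) := by
  rintro ⟨j, i⟩ ⟨j', i'⟩ h
  have hj := j.2
  have hj' := j'.2
  simp only [tC4label, Fin.ext_iff] at h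
  fin_cases i <;> fin_cases i' <;> simp [Fin.val_rev] at h ⊢ <;> omega

theorem tC4label_bijective (t : ℕ) : Function.Bijective (tC4label t) :=
  (Fintype.bijective_iff_injective_and_card _).2 ⟨tC4label_injective t, by simp [mul_comm]⟩

theorem tC4_distance_magic_general (t : ℕ) :
    IsDistanceMagic (tC4graph t) (4 * t + 1) := by
  have hcard : 4 * t = Fintype.card (Fin t × Fin 4) := by simp [mul_comm]
  refine ⟨(Equiv.ofBijective _ (tC4label_bijective t)).trans (finCongr hcard), ?_⟩
  rintro ⟨j, i⟩
  have hantipodal : i + 3 = i + 1 + 2 := by rw [add_assoc]; rfl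
  have hlt := (tC4label t (j, i + 1)).isLt
  simp only [vertexWeight_tC4graph, hantipodal, Equiv.trans_apply, Equiv.ofBijective_apply,
    finCongr_apply, Fin.val_cast, tC4label_add_two, Fin.val_rev]
  omega

/-- For `t ≥ 1`, `t C₄` is distance magic with magic constant `4t + 1`. -/
theorem tC4_distance_magic (t : ℕ) (ht : 1 ≤ t) :
    IsDistanceMagic (tC4graph t) (4 * t + 1) :=
  tC4_distance_magic_general t
end

section
/- If G is a distance magic graph on n vertices with magic constant k = n+1, then G is 2-regular. -/
open Finset
open scoped Classical

/-!
Every label is at most `n`, so a vertex of degree at most one has weight at most `n`; hence a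
weight of `n + 1` forces every degree to be at least `2`. Summing all weights counts each label
once per neighbor: `∑ deg u * f u = n (n + 1) = 2 ∑ f u`. As all labels are positive and all
degrees are at least `2`, every degree is exactly `2`.
-/

namespace vertexWeight

variable {V : Type} [Fintype V] (G : SimpleGraph V) (g : V → ℕ)

theorem eq_sum_neighborFinset (v : V) :
    vertexWeight G g v = ∑ u ∈ G.neighborFinset v, g u := by
  rw [vertexWeight, ← SimpleGraph.neighborFinset_eq_filter]

theorem le_degree_mul {m : ℕ} (hg : ∀ u, g u ≤ m) (v : V) :
    vertexWeight G g v ≤ G.degree v * m := by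
  rw [eq_sum_neighborFinset, ← smul_eq_mul, ← SimpleGraph.card_neighborFinset_eq_degree]
  exact sum_le_card_nsmul _ _ _ fun u _ => hg u

theorem two_le_degree_of_lt {m : ℕ} (hg : ∀ u, g u ≤ m) {v : V}
    (hv : m < vertexWeight G g v) : 2 ≤ G.degree v := by
  by_contra! hdeg
  have := le_degree_mul G g hg v
  have : G.degree v * m ≤ m := by simpa using Nat.mul_le_mul_right m (Nat.le_of_lt_succ hdeg)
  omega

theorem sum_eq_sum_degree_mul : ∑ v, vertexWeight G g v = ∑ u, G.degree u * g u := by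
  simp only [eq_sum_neighborFinset]
  rw [sum_comm' (t' := univ) (s' := fun u => G.neighborFinset u) fun v u => by simp [G.adj_comm]]
  simp [SimpleGraph.card_neighborFinset_eq_degree]

end vertexWeight

theorem two_mul_sum_equiv_fin_succ {V : Type} [Fintype V] (f : V ≃ Fin (Fintype.card V)) :
    2 * ∑ u, ((f u : ℕ) + 1) = Fintype.card V * (Fintype.card V + 1) := by
  rw [Equiv.sum_comp f (fun i => (i : ℕ) + 1), Fin.sum_univ_eq_sum_range (· + 1)]
  have := sum_range_succ' (fun i => i) (Fintype.card V)
  have := sum_range_id_mul_two (Fintype.card V + 1)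
  simp only [add_zero, add_tsub_cancel_right] at *
  linarith

/-- A distance magic graph with magic constant `k = n + 1` is `2`-regular. -/
theorem two_regular_of_magic_constant_n_add_one {V : Type} [Fintype V] (G : SimpleGraph V)
    (h : IsDistanceMagic G (Fintype.card V + 1)) :
    G.IsRegularOfDegree 2 := by
  obtain ⟨f, hf⟩ := h
  set g : V → ℕ := fun u => (f u : ℕ) + 1
  have hdeg (v : V) : 2 ≤ G.degree v :=
    vertexWeight.two_le_degree_of_lt G g (fun u => (f u).isLt) (by rw [hf]; omega)
  have hsum : ∑ u, 2 * g u = ∑ u, G.degree u * g u := by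
    rw [← mul_sum, two_mul_sum_equiv_fin_succ, ← vertexWeight.sum_eq_sum_degree_mul]
    simp [hf]
  have heq := (sum_eq_sum_iff_of_le fun u _ => Nat.mul_le_mul_right (g u) (hdeg u)).mp hsum
  exact fun v => (Nat.eq_of_mul_eq_mul_right (Nat.succ_pos _) (heq v (mem_univ v))).symm
end

section
/- Every odd integer k ≥ 3 is a magic constant, i.e., for every odd k ≥ 3 there exists a distance magic graph with magic constant k. -/
open Finset
open scoped Classical

/-
Write `k = 2s + 1` and give the labels `ℓ` and `k - ℓ`, whose sum is `k`, the common index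
`min ℓ (k - ℓ)`; the label `k` itself, if present, is alone at index `0`. Using the labels
`1, …, 2s + 1 - d` with `d ∈ {0, 1}`, the indices in use are `d, …, s`, and joining `i` to
`s + d - i` matches them perfectly once `s + d` is odd. Pulled back to the labels, this makes
every vertex adjacent to exactly one fibre of the index map, whose labels sum to `k`.
For `d = 1` the graph is a union of copies of `C₄`; for `d = 0` the index `0` is joined to `s`,
giving a `P₃` with centre `k` and ends `s`, `s + 1`.
-/

namespace SimpleGraph

variable {V W : Type} [Fintype V] [DecidableEq W]

theorem vertexWeight_comap (H : SimpleGraph W) (p : V → W) (f : V → ℕ) (v : V) (t : Finset W)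
    (hp : ∀ u, p u ∈ t) :
    vertexWeight (H.comap p) f v = ∑ w ∈ t with H.Adj (p v) w, ∑ u with p u = w, f u := by
  refine (sum_fiberwise_of_maps_to (g := p) (t := {w ∈ t | H.Adj (p v) w})
    (fun u hu => ?_) f).symm.trans ?_
  · exact mem_filter.2 ⟨hp u, (mem_filter.1 hu).2⟩
  refine sum_congr rfl fun w hw => sum_congr ?_ fun _ _ => rfl
  ext u
  simp only [mem_filter, mem_univ, true_and, comap_adj]
  constructor
  · exact And.right
  · rintro rfl
    exact ⟨(mem_filter.1 hw).2, rfl⟩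

theorem isDistanceMagic_comap {k : ℕ} (H : SimpleGraph W) (p : V → W)
    (ℓ : V ≃ Fin (Fintype.card V)) (t : Finset W) (hp : ∀ u, p u ∈ t)
    (hH : ∀ w ∈ t, #{w' ∈ t | H.Adj w w'} = 1)
    (hfiber : ∀ w ∈ t, ∑ u with p u = w, ((ℓ u : ℕ) + 1) = k) :
    IsDistanceMagic (H.comap p) k := by
  refine ⟨ℓ, fun v => ?_⟩
  rw [vertexWeight_comap H p _ v t hp, sum_congr rfl fun w hw => hfiber w (mem_filter.1 hw).1,
    sum_const, hH _ (hp v), one_smul]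

end SimpleGraph

def sumMatching (c : ℕ) : SimpleGraph ℕ := SimpleGraph.fromRel fun i j => i + j = c

theorem filter_sumMatching_adj_Icc {a b i : ℕ} (hab : Odd (a + b)) (hi : i ∈ Icc a b) :
    {j ∈ Icc a b | (sumMatching (a + b)).Adj i j} = {a + b - i} := by
  obtain ⟨r, hr⟩ := hab
  ext j
  simp only [mem_filter, mem_Icc, sumMatching, SimpleGraph.fromRel_adj, mem_singleton] at hi ⊢
  omega

def pairIndex (k ℓ : ℕ) : ℕ := min ℓ (k - ℓ)

theorem sum_filter_pairIndex_eq {k N i : ℕ} (hN : N ≤ k) (hi : 2 * i < k) (hiN : k ≤ N + i) :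
    ∑ a ∈ univ.filter fun a : Fin N => pairIndex k (a + 1) = i, ((a : ℕ) + 1) = k := by
  rcases Nat.eq_zero_or_pos i with rfl | hi0
  · have hfiber : univ.filter (fun a : Fin N => pairIndex k (a + 1) = 0) =
        {⟨k - 1, by omega⟩} := by
      ext a
      rw [mem_filter_univ, mem_singleton, Fin.ext_iff]
      dsimp only [pairIndex]
      omega
    rw [hfiber, sum_singleton]
    dsimp only
    omega
  · have hne : (⟨i - 1, by omega⟩ : Fin N) ≠ ⟨k - i - 1, by omega⟩ := by
      simp only [ne_eq, Fin.mk.injEq]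
      omega
    have hfiber : univ.filter (fun a : Fin N => pairIndex k (a + 1) = i) =
        {⟨i - 1, by omega⟩, ⟨k - i - 1, by omega⟩} := by
      ext a
      rw [mem_filter_univ, mem_insert, mem_singleton, Fin.ext_iff, Fin.ext_iff]
      dsimp only [pairIndex]
      omega
    rw [hfiber, sum_pair hne]
    dsimp only
    omega

def magicGraph (s d : ℕ) : SimpleGraph (Fin (2 * s + 1 - d)) :=
  (sumMatching (d + s)).comap fun a => pairIndex (2 * s + 1) (a + 1)

theorem isDistanceMagic_magicGraph {s d : ℕ} (hd : d ≤ 1) (hsd : Odd (d + s)) :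
    IsDistanceMagic (magicGraph s d) (2 * s + 1) := by
  refine SimpleGraph.isDistanceMagic_comap _ _ (finCongr (Fintype.card_fin _).symm) (Icc d s)
    (fun a => ?_) (fun i hi => ?_) (fun i hi => ?_)
  · simp only [mem_Icc, pairIndex]
    omega
  · rw [filter_sumMatching_adj_Icc hsd hi, card_singleton]
  · simp only [finCongr_apply, Fin.val_cast]
    rw [mem_Icc] at hi
    exact sum_filter_pairIndex_eq (by omega) (by omega) (by omega)

/-- Every odd integer `k ≥ 3` is a magic constant. -/
theorem odd_is_magic_constant (k : ℕ) (hk : 3 ≤ k) (hodd : Odd k) :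
    IsMagicConstant k := by
  obtain ⟨s, rfl⟩ := hodd
  obtain ⟨d, hd, hsd⟩ : ∃ d ≤ 1, Odd (d + s) := by
    rcases Nat.even_or_odd s with hs | hs
    · exact ⟨1, le_rfl, hs.one_add⟩
    · exact ⟨0, zero_le_one, by rwa [zero_add]⟩
  exact ⟨2 * s + 1 - d, by omega, magicGraph s d, isDistanceMagic_magicGraph hd hsd⟩
end

section
/- For every t ≥ 3, the integer 4t+2 is a magic constant. -/
/-!
Let `H` be a `d`-regular graph on a vertex type `W` with `n` elements. In its lexicographic
product `H[K̄₂]`, modelled as `H.comap Prod.fst` on `W × Bool`, the two copies of a vertex have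
the same neighbourhood, namely both copies of each `H`-neighbour. Labelling the copies of the
`i`-th vertex by `i + 1` and `2n - i` makes every neighbourhood the union of `d` twin pairs with
label sum `2n + 1`, so every weight is `d (2n + 1)`. For the cycle `C_t` this gives
`2 (2t + 1) = 4t + 2`.
-/

open Finset
open scoped Classical

open SimpleGraph

section

variable {V W : Type} [Fintype V] [Fintype W]

theorem vertexWeight_iso {G : SimpleGraph V} {G' : SimpleGraph W} (φ : G ≃g G') (ℓ : W → ℕ)
    (v : V) : vertexWeight G' ℓ (φ v) = vertexWeight G (ℓ ∘ φ) v := by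
  refine (Finset.sum_equiv φ.toEquiv (fun u => ?_) fun _ _ => rfl).symm
  simp only [mem_filter, mem_univ, true_and]
  exact φ.map_adj_iff.symm

theorem vertexWeight_comap_fst {β : Type} [Fintype β] (H : SimpleGraph W) [DecidableRel H.Adj]
    (ℓ : W × β → ℕ) (v : W × β) :
    vertexWeight (H.comap Prod.fst) ℓ v = ∑ a ∈ univ.filter (H.Adj v.1), ∑ j, ℓ (a, j) := by
  rw [vertexWeight, ← Finset.sum_product']
  congr 1
  ext u
  simp

theorem isDistanceMagic_of_equiv {G : SimpleGraph V} {k m : ℕ} (f : V ≃ Fin m)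
    (hf : ∀ v, vertexWeight G (fun u => (f u : ℕ) + 1) v = k) : IsDistanceMagic G k := by
  obtain rfl : Fintype.card V = m := by simpa using Fintype.card_congr f
  exact ⟨f, hf⟩

theorem IsDistanceMagic.of_iso {G : SimpleGraph V} {G' : SimpleGraph W} {k : ℕ} (φ : G ≃g G')
    (h : IsDistanceMagic G k) : IsDistanceMagic G' k := by
  obtain ⟨f, hf⟩ := h
  refine isDistanceMagic_of_equiv (φ.symm.toEquiv.trans f) fun v => ?_
  rw [← hf (φ.symm v)]
  exact (vertexWeight_iso φ.symm (fun u => (f u : ℕ) + 1) v).symm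

theorem IsDistanceMagic.isMagicConstant [Nonempty V] {G : SimpleGraph V} {k : ℕ}
    (h : IsDistanceMagic G k) : IsMagicConstant k :=
  ⟨_, Fintype.card_pos, _, h.of_iso (Iso.map (Fintype.equivFin V) G)⟩

def twinLabeling (n : ℕ) : Fin n × Bool ≃ Fin (n + n) :=
  (Equiv.prodComm _ _).trans <| (Equiv.boolProdEquivSum _).trans <|
    (Equiv.sumCongr (Equiv.refl _) Fin.revPerm).trans finSumFinEquiv

theorem sum_twinLabeling_add_one {n : ℕ} (a : Fin n) :
    ∑ j, ((twinLabeling n (a, j) : ℕ) + 1) = 2 * n + 1 := by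
  have h_false : twinLabeling n (a, false) = Fin.castAdd n a := rfl
  have h_true : twinLabeling n (a, true) = Fin.natAdd n a.rev := rfl
  rw [Fintype.sum_bool, h_false, h_true, Fin.val_natAdd, Fin.val_rev, Fin.val_castAdd]
  omega

theorem isDistanceMagic_comap_fst_of_isRegularOfDegree {H : SimpleGraph W} [DecidableRel H.Adj]
    {d : ℕ} (hH : H.IsRegularOfDegree d) :
    IsDistanceMagic (H.comap (Prod.fst : W × Bool → W)) (d * (2 * Fintype.card W + 1)) := by
  let f := ((Fintype.equivFin W).prodCongr (Equiv.refl Bool)).trans (twinLabeling _)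
  refine isDistanceMagic_of_equiv f fun v => ?_
  calc vertexWeight (H.comap Prod.fst) (fun u => (f u : ℕ) + 1) v
      = ∑ a ∈ univ.filter (H.Adj v.1), (2 * Fintype.card W + 1) := by
        rw [vertexWeight_comap_fst]
        exact sum_congr rfl fun a _ => sum_twinLabeling_add_one _
    _ = d * (2 * Fintype.card W + 1) := by
        rw [sum_const, smul_eq_mul, ← hH v.1, ← card_neighborFinset_eq_degree,
          neighborFinset_eq_filter]

end

/-- For every `t ≥ 3`, `4t + 2` is a magic constant. -/
theorem four_t_add_two_is_magic_constant (t : ℕ) (ht : 3 ≤ t) :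
    IsMagicConstant (4 * t + 2) := by
  obtain ⟨n, rfl⟩ : ∃ n, t = n + 3 := ⟨t - 3, by omega⟩
  have hC : (cycleGraph (n + 3)).IsRegularOfDegree 2 := fun _ => cycleGraph_degree_three_le
  have hmagic := (isDistanceMagic_comap_fst_of_isRegularOfDegree hC).isMagicConstant
  rwa [Fintype.card_fin, show 2 * (2 * (n + 3) + 1) = 4 * (n + 3) + 2 by ring] at hmagic
end
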